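/- If a vector d = (d29,…,d46) ∈ ℝ^18 satisfies the six relations (i) d32+d36−d33−d46−d44−d39+d37+d41 = 0; (ii) d32+d36−d33−2d44+d40−d39+d37−d31+d29+d43−d46 = 0; (iii) d32−d33−2d44+d40−d39+d37+d35−d31+d29+d42−d45 = 0; (iv) d36+2d32−d33−2d44+d40−d39+d37−d34 = 0; (v) d42+2d29−d30+d40−2d44−d39+d37−d31 = 0; (vi) d38+d40−d39−d44−d31+d29+d42−d45 = 0, then the explicit vector c^E_s(d) ∈ ℝ^15 defined below satisfies M_E · c^E_s(d) = d; in particular c^E_s(d) is a particular solution of the inhomogeneous system. -/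
import Mathlib


noncomputable section

/-- The coefficient matrix `M_E` of the type-E divergence system:
rows are `d29,…,d46`, columns are `c39,…,c53`. -/
def ME : Matrix (Fin 18) (Fin 15) ℝ :=
  !![0, 0, 0, 1, 0, 0, 0, 0, 0, 1, 0, 0, 0, 0, 0;
    0, 1, 0, 1, 0, 0, 0, 0, 0, 0, 0, 0, 1, 0, 0;
    0, 0, 0, 1, 0, 0, 0, 0, 1, 0, 0, 0, 0, 1, 0;
    0, 0, 0, 0, 1, 0, 0, 0, 0, 1, 0, 0, 0, 0, 0;
    0, 0, 0, 0, 1, 1, 0, 0, 0, 0, 0, 0, 1, 0, 0;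
    0, 0, 1, 0, 1, 0, 0, 0, 0, 0, 0, 0, 0, 1, 0;
    0, 0, 0, 0, 0, 1, 0, 0, 0, 0, 1, 0, 0, 0, 0;
    0, 0, 1, 0, 0, 1, 0, 0, 0, 0, 0, 0, 0, 0, 1;
    1, 0, 0, 0, 0, 0, 1, 0, 0, 0, 0, 0, 1, 0, 0;
    0, 0, 0, 0, 0, 0, 1, 0, 0, 0, 1, 0, 0, 0, 0;
    0, 0, 0, 0, 0, 0, 1, 1, 0, 0, 0, 0, 0, 0, 1;
    1, 0, 0, 0, 0, 0, 0, 1, 0, 0, 0, 0, 0, 1, 0;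
    0, 0, 0, 0, 0, 0, 0, 1, 0, 0, 0, 1, 0, 0, 0;
    0, 1, 0, 0, 0, 0, 0, 0, 1, 0, 0, 0, 0, 0, 1;
    0, 0, 0, 0, 0, 0, 0, 0, 1, 0, 0, 1, 0, 0, 0;
    1, 0, 0, 0, 0, 0, 0, 0, 0, 1, 0, 0, 0, 0, 0;
    0, 1, 0, 0, 0, 0, 0, 0, 0, 0, 1, 0, 0, 0, 0;
    0, 0, 1, 0, 0, 0, 0, 0, 0, 0, 0, 1, 0, 0, 0]

/-- The particular solution `c^E_s(d) ∈ ℝ^15` of the type-E system. -/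
def cEs (d : Fin 18 → ℝ) : Fin 15 → ℝ :=
  ![(1/2) * d 8 - (1/2) * d 10 + (1/2) * d 11,
    d 0 - d 2 + (1/2) * d 8 - (1/2) * d 10 + (1/2) * d 11 + d 13 - d 15,
    d 3 - d 4 + d 7 + (1/2) * d 8 - (1/2) * d 10 + (1/2) * d 11 - d 15,
    d 0 + (1/2) * d 8 - (1/2) * d 10 + (1/2) * d 11 - d 15,
    d 3 + (1/2) * d 8 - (1/2) * d 10 + (1/2) * d 11 - d 15,
    -d 3 + d 4 - (1/2) * d 8 + (1/2) * d 10 - (1/2) * d 11 + d 15,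
    (1/2) * d 8 + (1/2) * d 10 - (1/2) * d 11,
    -(1/2) * d 8 + (1/2) * d 10 + (1/2) * d 11,
    -d 0 + d 2 - (1/2) * d 8 + (1/2) * d 10 - (1/2) * d 11 + d 15,
    -(1/2) * d 8 + (1/2) * d 10 - (1/2) * d 11 + d 15,
    -d 0 + d 2 - (1/2) * d 8 + (1/2) * d 10 - (1/2) * d 11 - d 13 + d 15 + d 16,
    -d 3 + d 4 - d 7 - (1/2) * d 8 + (1/2) * d 10 - (1/2) * d 11 + d 15 + d 17,
    0,
    0,
    0]

set_option maxHeartbeats 4000000 in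
/-- If `d ∈ ℝ^18` satisfies the six relations (i)–(vi), then `M_E ⬝ c^E_s(d) = d`. -/
theorem ME_particular_solution :
    ∀ d : Fin 18 → ℝ,
      d 3 + d 7 - d 4 - d 17 - d 15 - d 10 + d 8 + d 12 = 0 →
      d 3 + d 7 - d 4 - 2 * d 15 + d 11 - d 10 + d 8 - d 2 + d 0 + d 14 - d 17 = 0 →
      d 3 - d 4 - 2 * d 15 + d 11 - d 10 + d 8 + d 6 - d 2 + d 0 + d 13 - d 16 = 0 →
      d 7 + 2 * d 3 - d 4 - 2 * d 15 + d 11 - d 10 + d 8 - d 5 = 0 →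
      d 13 + 2 * d 0 - d 1 + d 11 - 2 * d 15 - d 10 + d 8 - d 2 = 0 →
      d 9 + d 11 - d 10 - d 15 - d 2 + d 0 + d 13 - d 16 = 0 →
      ME.mulVec (cEs d) = d := by
  intro d h1 h2 h3 h4 h5 h6
  funext i
  fin_cases i <;>
    norm_num [ME, cEs, Matrix.mulVec, dotProduct, Fin.sum_univ_succ,
      Matrix.cons_val_zero, Matrix.cons_val_one, Matrix.head_cons] <;>
    (try simp only [show (⟨0, by norm_num⟩ : Fin 18) = 0 from rfl, show (⟨1, by norm_num⟩ : Fin 18) = 1 from rfl, show (⟨2, by norm_num⟩ : Fin 18) = 2 from rfl, show (⟨3, by norm_num⟩ : Fin 18) = 3 from rfl, show (⟨4, by norm_num⟩ : Fin 18) = 4 from rfl, show (⟨5, by norm_num⟩ : Fin 18) = 5 from rfl, show (⟨6, by norm_num⟩ : Fin 18) = 6 from rfl, show (⟨7, by norm_num⟩ : Fin 18) = 7 from rfl, show (⟨8, by norm_num⟩ : Fin 18) = 8 from rfl, show (⟨9, by norm_num⟩ : Fin 18) = 9 from rfl, show (⟨10, by norm_num⟩ : Fin 18) = 10 from rfl,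 show (⟨11, by norm_num⟩ : Fin 18) = 11 from rfl, show (⟨12, by norm_num⟩ : Fin 18) = 12 from rfl, show (⟨13, by norm_num⟩ : Fin 18) = 13 from rfl, show (⟨14, by norm_num⟩ : Fin 18) = 14 from rfl, show (⟨15, by norm_num⟩ : Fin 18) = 15 from rfl, show (⟨16, by norm_num⟩ : Fin 18) = 16 from rfl, show (⟨17, by norm_num⟩ : Fin 18) = 17 from rfl]) <;>
    linarith
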